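/- arXiv:1204.2587 — 4 statements merged into one kernel-verified Lean document; each statement's English description precedes it below -/
import Mathlib

section
/- Let V be a random variable on a finite set 𝒱 with Shannon entropy H(V) ≥ λ, and let V₁,…,V_m be i.i.d. copies of V. Then the probability that V₁,…,V_m are all distinct is at least ((λ − 1 − log₂ m)/log₂ |𝒱|)^{m−1}. -/
/-!
Grouping the entropy sum over a set `A` of at most `m` values and over its complement gives
`H(V) ≤ 1 + log₂ |A| + P(V ∉ A) · log₂ |𝒱|` (the `1` bounds the binary entropy of the split),
so a fresh sample avoids `A` with probability at least `r = (λ - 1 - log₂ m) / log₂ |𝒱|`.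
Given distinct `V₁, …, V_k` with `k < m`, the next sample avoids them with probability `≥ r`;
multiplying over `k = 1, …, m - 1` gives `r ^ (m - 1)`.
-/

open Finset Real Function

theorem log_natCast_le_log_natCast {a b : ℕ} (h : a ≤ b) : log a ≤ log b := by
  rcases a.eq_zero_or_pos with rfl | ha
  · simpa using log_natCast_nonneg b
  · exact log_le_log (by exact_mod_cast ha) (by exact_mod_cast h)

theorem sum_negMulLog_le_negMulLog_sum_add_mul_log_card {ι : Type*} (s : Finset ι) (p : ι → ℝ)
    (hp : ∀ i ∈ s, 0 ≤ p i) :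
    ∑ i ∈ s, negMulLog (p i) ≤ negMulLog (∑ i ∈ s, p i) + (∑ i ∈ s, p i) * log #s := by
  rcases s.eq_empty_or_nonempty with rfl | hs
  · simp
  have hn : (0 : ℝ) < #s := by exact_mod_cast hs.card_pos
  have jensen := concaveOn_negMulLog.le_map_sum (t := s) (w := fun _ ↦ (#s : ℝ)⁻¹)
    (fun _ _ ↦ by positivity) (by simp [hn.ne']) hp
  simp only [smul_eq_mul, ← mul_sum] at jensen
  calc ∑ i ∈ s, negMulLog (p i) = #s * ((#s : ℝ)⁻¹ * ∑ i ∈ s, negMulLog (p i)) := by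
        field_simp
    _ ≤ #s * negMulLog ((#s : ℝ)⁻¹ * ∑ i ∈ s, p i) := by gcongr
    _ = negMulLog (∑ i ∈ s, p i) + (∑ i ∈ s, p i) * log #s := by
      rw [mul_comm _ (∑ i ∈ s, p i), negMulLog_mul,
        show negMulLog (#s : ℝ)⁻¹ = (#s : ℝ)⁻¹ * log #s by simp [negMulLog, log_inv]]
      field_simp

section Sampling

variable {V : Type*} [Fintype V] [DecidableEq V]

theorem sum_negMulLog_le_log_two_add_log_card_add (p : V → ℝ) (hp0 : ∀ v, 0 ≤ p v)
    (hp1 : ∑ v, p v = 1) (A : Finset V) :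
    ∑ v, negMulLog (p v) ≤ log 2 + log #A + (∑ v ∈ Aᶜ, p v) * log (Fintype.card V) := by
  have hsplit := sum_add_sum_compl A p
  rw [hp1] at hsplit
  have hA := sum_negMulLog_le_negMulLog_sum_add_mul_log_card A p fun v _ ↦ hp0 v
  have hAc := sum_negMulLog_le_negMulLog_sum_add_mul_log_card Aᶜ p fun v _ ↦ hp0 v
  have hbin : negMulLog (∑ v ∈ A, p v) + negMulLog (∑ v ∈ Aᶜ, p v) ≤ log 2 := by
    rw [eq_sub_of_add_eq' hsplit, ← binEntropy_eq_negMulLog_add_negMulLog_one_sub]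
    exact binEntropy_le_log_two
  have hSA : (∑ v ∈ A, p v) * log #A ≤ log #A :=
    mul_le_of_le_one_left (log_natCast_nonneg _)
      (by linarith [sum_nonneg fun v (_ : v ∈ Aᶜ) ↦ hp0 v])
  have hSAc : (∑ v ∈ Aᶜ, p v) * log #Aᶜ ≤ (∑ v ∈ Aᶜ, p v) * log (Fintype.card V) :=
    mul_le_mul_of_nonneg_left (log_natCast_le_log_natCast (card_le_univ _))
      (sum_nonneg fun v _ ↦ hp0 v)
  rw [← sum_add_sum_compl A]
  linarith

theorem div_logb_card_le_sum_compl (p : V → ℝ) (hp0 : ∀ v, 0 ≤ p v) (hp1 : ∑ v, p v = 1)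
    {lam : ℝ} (hH : lam ≤ ∑ v, -(p v * logb 2 (p v))) (hV : 2 ≤ Fintype.card V)
    {m : ℕ} (A : Finset V) (hA : #A ≤ m) :
    (lam - 1 - logb 2 m) / logb 2 (Fintype.card V) ≤ ∑ v ∈ Aᶜ, p v := by
  have hlog2 : 0 < log 2 := log_pos one_lt_two
  have hH' : lam * log 2 ≤ ∑ v, negMulLog (p v) := by
    have hbits : ∑ v, -(p v * logb 2 (p v)) = (∑ v, negMulLog (p v)) / log 2 := by
      rw [sum_div]
      exact sum_congr rfl fun v _ ↦ by rw [logb, negMulLog]; ring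
    rwa [hbits, le_div_iff₀ hlog2] at hH
  have hent := sum_negMulLog_le_log_two_add_log_card_add p hp0 hp1 A
  have hAm := log_natCast_le_log_natCast hA
  rw [div_le_iff₀ (logb_pos one_lt_two (by exact_mod_cast hV)), logb, logb, mul_div_assoc',
    le_div_iff₀ hlog2, sub_mul, sub_mul, div_mul_cancel₀ _ hlog2.ne']
  linarith

/-- The probability that `n` independent samples with mass function `p` are pairwise distinct. -/
def probDistinct (p : V → ℝ) (n : ℕ) : ℝ :=
  ∑ f ∈ univ.filter (fun f : Fin n → V ↦ Injective f), ∏ i, p (f i)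

theorem probDistinct_succ (p : V → ℝ) (n : ℕ) :
    probDistinct p (n + 1) =
      ∑ g ∈ univ.filter (fun g : Fin n → V ↦ Injective g),
        (∑ v ∈ (univ.image g)ᶜ, p v) * ∏ i, p (g i) := by
  rw [probDistinct, sum_filter, sum_filter, ← (Fin.consEquiv fun _ ↦ V).sum_comp,
    Fintype.sum_prod_type, sum_comm]
  refine sum_congr rfl fun g _ ↦ ?_
  by_cases hg : Injective g
  · simp only [Fin.consEquiv, Equiv.coe_fn_mk, Fin.cons_injective_iff, hg, and_true,
      Fin.prod_univ_succ, Fin.cons_zero, Fin.cons_succ, if_true, sum_mul, ← sum_filter]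
    congr 1
    ext v
    simp
  · simp [Fin.consEquiv, Fin.cons_injective_iff, hg]

theorem mul_probDistinct_le_probDistinct_succ (p : V → ℝ) (hp0 : ∀ v, 0 ≤ p v) {r : ℝ} {n : ℕ}
    (hr : ∀ A : Finset V, #A = n → r ≤ ∑ v ∈ Aᶜ, p v) :
    r * probDistinct p n ≤ probDistinct p (n + 1) := by
  rw [probDistinct_succ, probDistinct, mul_sum]
  refine sum_le_sum fun g hg ↦ mul_le_mul_of_nonneg_right (hr _ ?_) (prod_nonneg fun i _ ↦ hp0 _)
  rw [card_image_of_injective _ (mem_filter.mp hg).2, card_univ, Fintype.card_fin]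

theorem pow_le_probDistinct_succ (p : V → ℝ) (hp0 : ∀ v, 0 ≤ p v) (hp1 : ∑ v, p v = 1)
    {r : ℝ} (hr0 : 0 ≤ r) {n : ℕ} (hr : ∀ A : Finset V, #A ≤ n → r ≤ ∑ v ∈ Aᶜ, p v) :
    r ^ n ≤ probDistinct p (n + 1) := by
  induction n with
  | zero =>
    rw [pow_zero, probDistinct_succ]
    simp [hp1, injective_of_subsingleton]
  | succ n ih =>
    calc r ^ (n + 1) = r * r ^ n := pow_succ' r n
      _ ≤ r * probDistinct p (n + 1) :=
        mul_le_mul_of_nonneg_left (ih fun A hA ↦ hr A (by omega)) hr0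
      _ ≤ probDistinct p (n + 2) :=
        mul_probDistinct_le_probDistinct_succ p hp0 fun A hA ↦ hr A hA.le

end Sampling

/-- If `V` is a random variable on a finite set with (binary) entropy at
least `lam`, and `V₁,…,V_m` are i.i.d. copies, then the probability that they are all
distinct is at least `((lam - 1 - log₂ m)/log₂ |𝒱|)^(m-1)`. -/
theorem babble_sampling_lemma {V : Type*} [Fintype V] [DecidableEq V]
    (p : V → ℝ) (hp0 : ∀ v, 0 ≤ p v) (hp1 : ∑ v, p v = 1)
    (lam : ℝ) (hH : lam ≤ ∑ v, -(p v * Real.logb 2 (p v)))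
    (m : ℕ) (hm : 1 ≤ m)
    (hlam : 0 ≤ lam - 1 - Real.logb 2 m)
    (hV : 2 ≤ Fintype.card V) :
    ((lam - 1 - Real.logb 2 m) / Real.logb 2 (Fintype.card V)) ^ (m - 1)
      ≤ ∑ f ∈ Finset.univ.filter (fun f : Fin m → V => Function.Injective f),
          ∏ i, p (f i) := by
  obtain ⟨n, rfl⟩ : ∃ n, m = n + 1 := ⟨m - 1, by omega⟩
  have hr0 : 0 ≤ (lam - 1 - logb 2 (n + 1 : ℕ)) / logb 2 (Fintype.card V) :=
    div_nonneg hlam (logb_nonneg one_lt_two (by exact_mod_cast hV.trans' one_le_two))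
  rw [Nat.add_sub_cancel]
  exact pow_le_probDistinct_succ p hp0 hp1 hr0 fun A hA ↦
    div_logb_card_le_sum_compl p hp0 hp1 hH hV A (by omega)
end

section
/- (Plotkin bound) Any binary code of block-length n with minimum Hamming distance d_min > n/2 has at most 2·d_min/(2·d_min − n) codewords. -/
open Finset

/-- Plotkin bound: any binary code of block-length `n` with minimum
Hamming distance `d > n/2` (i.e. `2d > n`) has at most `2d/(2d - n)` codewords. -/
theorem plotkin_bound (n d : ℕ) (C : Finset (Fin n → Bool))
    (hmin : ∀ x ∈ C, ∀ y ∈ C, x ≠ y → d ≤ hammingDist x y)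
    (h2d : n < 2 * d) :
    (C.card : ℝ) ≤ (2 * d : ℝ) / (2 * d - n) := by
  classical
  have hpos : (0:ℝ) < 2 * (d:ℝ) - n := by
    have : (n:ℝ) < 2 * d := by exact_mod_cast h2d
    linarith
  rcases Nat.eq_zero_or_pos C.card with hM | hM
  · rw [hM]
    push_cast
    positivity
  obtain ⟨m, hm⟩ : ∃ m, C.card = m + 1 := ⟨C.card - 1, by omega⟩
  -- lower bound on double sum
  have lower : C.card * (m * d) ≤ ∑ x ∈ C, ∑ y ∈ C, hammingDist x y := by
    have := Finset.card_nsmul_le_sum C (fun x => ∑ y ∈ C, hammingDist x y) (m * d) ?_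
    · simpa using this
    intro x hx
    show m * d ≤ ∑ y ∈ C, hammingDist x y
    have h1 : ∑ y ∈ C.erase x, hammingDist x y = ∑ y ∈ C, hammingDist x y := by
      apply Finset.sum_erase
      simp
    rw [← h1]
    calc m * d = (C.erase x).card * d := by rw [Finset.card_erase_of_mem hx, hm]; simp
    _ = ∑ _y ∈ C.erase x, d := by rw [Finset.sum_const, smul_eq_mul]
    _ ≤ _ := Finset.sum_le_sum fun y hy =>
        hmin x hx y (Finset.mem_of_mem_erase hy) (Ne.symm (Finset.ne_of_mem_erase hy))
  -- rewrite hamming distance as a sum over coordinates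
  have hd_eq : ∀ x y : Fin n → Bool,
      hammingDist x y = ∑ i : Fin n, if x i ≠ y i then 1 else 0 := by
    intro x y
    rw [hammingDist, Finset.card_filter]
  -- per-coordinate bound
  have coord : ∀ i : Fin n,
      2 * (∑ x ∈ C, ∑ y ∈ C, if x i ≠ y i then (1:ℕ) else 0) ≤ C.card * C.card := by
    intro i
    obtain ⟨k, hk⟩ : ∃ k, (C.filter fun x => x i = true).card = k := ⟨_, rfl⟩
    have hsplit : (C.filter fun x => x i = true).card
        + (C.filter fun x => ¬ (x i = true)).card = C.card :=
      Finset.card_filter_add_card_filter_not _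
    have hkle : k ≤ C.card := hk ▸ Finset.card_filter_le _ _
    rw [hk] at hsplit
    have inner : ∀ x ∈ C, (∑ y ∈ C, if x i ≠ y i then (1:ℕ) else 0)
        = if x i = true then C.card - k else k := by
      intro x hx
      rw [← Finset.card_filter]
      by_cases hxi : x i = true
      · have hfe : (C.filter fun y => x i ≠ y i) = C.filter fun y => ¬ (y i = true) := by
          apply Finset.filter_congr
          intro y _
          rw [hxi]
          exact ne_comm
        rw [hfe, if_pos hxi]
        clear * - hsplit
        generalize (C.filter fun y => ¬ (y i = true)).card = a at hsplit ⊢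
        omega
      · have hxi' : x i = false := by simpa using hxi
        have hfe : (C.filter fun y => x i ≠ y i) = C.filter fun y => y i = true := by
          apply Finset.filter_congr
          intro y _
          rw [hxi']
          cases y i <;> simp
        rw [hfe, if_neg hxi, hk]
    rw [Finset.sum_congr rfl inner]
    rw [Finset.sum_ite, Finset.sum_const, Finset.sum_const, smul_eq_mul, smul_eq_mul]
    have h2 : (C.filter fun x => ¬ (x i = true)).card = C.card - k := by
      clear * - hsplit
      generalize (C.filter fun y => ¬ (y i = true)).card = a at hsplit ⊢
      omega
    rw [hk, h2]
    zify [hkle]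
    nlinarith [sq_nonneg ((C.card : ℤ) - 2 * k)]
  -- upper bound on double sum
  have upper : 2 * (∑ x ∈ C, ∑ y ∈ C, hammingDist x y) ≤ n * (C.card * C.card) := by
    have swap : ∑ x ∈ C, ∑ y ∈ C, hammingDist x y
        = ∑ i : Fin n, ∑ x ∈ C, ∑ y ∈ C, if x i ≠ y i then 1 else 0 := by
      calc ∑ x ∈ C, ∑ y ∈ C, hammingDist x y
          = ∑ x ∈ C, ∑ y ∈ C, ∑ i : Fin n, if x i ≠ y i then 1 else 0 := by
            simp_rw [hd_eq]
        _ = ∑ x ∈ C, ∑ i : Fin n, ∑ y ∈ C, if x i ≠ y i then 1 else 0 :=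
            Finset.sum_congr rfl fun x _ => Finset.sum_comm
        _ = ∑ i : Fin n, ∑ x ∈ C, ∑ y ∈ C, if x i ≠ y i then 1 else 0 :=
            Finset.sum_comm
    rw [swap, Finset.mul_sum]
    calc ∑ i : Fin n, 2 * (∑ x ∈ C, ∑ y ∈ C, if x i ≠ y i then (1:ℕ) else 0)
        ≤ ∑ _i : Fin n, C.card * C.card := Finset.sum_le_sum fun i _ => coord i
      _ = n * (C.card * C.card) := by simp [mul_comm, Finset.sum_const]
  -- combine
  have key0 : 2 * (C.card * (m * d)) ≤ n * (C.card * C.card) :=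
    le_trans (by omega) upper
  rw [hm] at key0
  have key : 2 * (m * d) ≤ n * (m + 1) := by
    have h' : (m + 1) * (2 * (m * d)) ≤ (m + 1) * (n * (m + 1)) := by ring_nf at key0 ⊢; linarith
    exact Nat.le_of_mul_le_mul_left h' (Nat.succ_pos m)
  rw [hm]
  rw [le_div_iff₀ hpos]
  have keyR : (2:ℝ) * (m * d) ≤ n * (m + 1) := by exact_mod_cast key
  push_cast
  nlinarith [keyR]
end

section
/- Let C ⊆ {0,1}^m be a set of N binary vectors with N > 2d/(2d − m) for some integer d with 2d > m. Then there exist two distinct vectors x, x' ∈ C with Hamming distance d_H(x,x') < d. -/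
open Finset

/-- contrapositive Plotkin: if `C ⊆ {0,1}^m` has `N > 2d/(2d-m)` vectors
with `2d > m`, then some two distinct vectors of `C` are at Hamming distance `< d`. -/
theorem plotkin_contrapositive (m d : ℕ) (C : Finset (Fin m → Bool))
    (h2d : m < 2 * d)
    (hN : (2 * d : ℝ) / (2 * d - m) < C.card) :
    ∃ x ∈ C, ∃ y ∈ C, x ≠ y ∧ hammingDist x y < d := by
  by_contra hcon
  push_neg at hcon
  set N := C.card with hNdef
  have hpos : (0:ℝ) < 2*d - m := by
    have hm : (m:ℝ) < 2*d := by exact_mod_cast h2d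
    linarith
  rw [div_lt_iff₀ hpos] at hN
  have hNpos : 1 ≤ N := by
    rcases Nat.eq_zero_or_pos N with h0 | h
    · rw [h0] at hN; push_cast at hN; nlinarith [Nat.cast_nonneg (α := ℝ) d]
    · exact h
  set S := ∑ x ∈ C, ∑ y ∈ C, hammingDist x y with hS
  -- lower bound
  have hlb : N * ((N - 1) * d) ≤ S := by
    rw [hS]
    calc N * ((N-1)*d) = ∑ _x ∈ C, (N-1)*d := by rw [sum_const, smul_eq_mul]
    _ ≤ ∑ x ∈ C, ∑ y ∈ C, hammingDist x y := by
        apply sum_le_sum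
        intro x hx
        have he : ∑ y ∈ C.erase x, hammingDist x y + hammingDist x x
            = ∑ y ∈ C, hammingDist x y := Finset.sum_erase_add C _ hx
        rw [hammingDist_self, add_zero] at he
        rw [← he]
        calc (N-1)*d = (C.erase x).card * d := by rw [card_erase_of_mem hx]
        _ = ∑ _y ∈ C.erase x, d := by rw [sum_const, smul_eq_mul]
        _ ≤ ∑ y ∈ C.erase x, hammingDist x y := by
            apply sum_le_sum
            intro y hy
            exact hcon x hx y (mem_erase.1 hy).2 (Ne.symm (mem_erase.1 hy).1)
  -- rewrite S coordinatewise
  have hS' : S = ∑ i : Fin m, ∑ x ∈ C, ∑ y ∈ C, (if x i ≠ y i then 1 else 0 : ℕ) := by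
    rw [hS]
    have : ∀ x y : Fin m → Bool, hammingDist x y
        = ∑ i : Fin m, (if x i ≠ y i then 1 else 0 : ℕ) := by
      intro x y
      simp [hammingDist, Finset.card_filter]
    calc ∑ x ∈ C, ∑ y ∈ C, hammingDist x y
        = ∑ x ∈ C, ∑ y ∈ C, ∑ i : Fin m, (if x i ≠ y i then 1 else 0 : ℕ) := by
          exact sum_congr rfl fun x _ => sum_congr rfl fun y _ => this x y
      _ = ∑ x ∈ C, ∑ i : Fin m, ∑ y ∈ C, (if x i ≠ y i then 1 else 0 : ℕ) := by
          exact sum_congr rfl fun x _ => sum_comm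
      _ = ∑ i : Fin m, ∑ x ∈ C, ∑ y ∈ C, (if x i ≠ y i then 1 else 0 : ℕ) := sum_comm
  -- upper bound per coordinate
  have hub : 2 * S ≤ m * N^2 := by
    rw [hS', mul_sum]
    calc ∑ i : Fin m, 2 * ∑ x ∈ C, ∑ y ∈ C, (if x i ≠ y i then 1 else 0 : ℕ)
        ≤ ∑ _i : Fin m, N^2 := by
          apply sum_le_sum
          intro i _
          set k := ∑ x ∈ C, (if x i = true then 1 else 0 : ℕ) with hk
          set l := ∑ x ∈ C, (if x i = true then 0 else 1 : ℕ) with hl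
          have hkl : k + l = N := by
            rw [hk, hl, ← sum_add_distrib]
            calc ∑ x ∈ C, ((if x i = true then 1 else 0) + (if x i = true then 0 else 1) : ℕ)
                = ∑ _x ∈ C, 1 := by
                  apply sum_congr rfl; intro x _; split_ifs <;> rfl
              _ = N := by rw [sum_const, smul_eq_mul, mul_one]
          have heq : ∑ x ∈ C, ∑ y ∈ C, (if x i ≠ y i then 1 else 0 : ℕ)
              = k * l + l * k := by
            have h1 : ∀ x y : Fin m → Bool, (if x i ≠ y i then 1 else 0 : ℕ)
                = (if x i = true then 1 else 0) * (if y i = true then 0 else 1)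
                  + (if x i = true then 0 else 1) * (if y i = true then 1 else 0) := by
              intro x y
              cases hx : x i <;> cases hy : y i <;> simp [hx, hy]
            calc ∑ x ∈ C, ∑ y ∈ C, (if x i ≠ y i then 1 else 0 : ℕ)
                = ∑ x ∈ C, ∑ y ∈ C, ((if x i = true then 1 else 0 : ℕ) * (if y i = true then 0 else 1)
                  + (if x i = true then 0 else 1) * (if y i = true then 1 else 0)) := by
                  exact sum_congr rfl fun x _ => sum_congr rfl fun y _ => h1 x y
              _ = ∑ x ∈ C, ((if x i = true then 1 else 0 : ℕ) * l
                  + (if x i = true then 0 else 1) * k) := by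
                  apply sum_congr rfl; intro x _
                  rw [sum_add_distrib, ← mul_sum, ← mul_sum]
              _ = k * l + l * k := by
                  rw [sum_add_distrib, ← sum_mul, ← sum_mul]
          rw [heq, ← hkl]
          rcases le_total k l with h | h <;> nlinarith
      _ = m * N^2 := by rw [sum_const, card_univ, Fintype.card_fin, smul_eq_mul]
  -- combine
  have hcomb : 2 * (N * ((N - 1) * d)) ≤ m * N^2 :=
    le_trans (Nat.mul_le_mul_left 2 hlb) hub
  have hcast : ((N:ℝ) - 1) = ((N - 1 : ℕ) : ℝ) := by
    rw [Nat.cast_sub hNpos]; norm_num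
  have hR : 2 * ((N:ℝ) * (((N:ℝ) - 1) * d)) ≤ m * (N:ℝ)^2 := by
    rw [hcast]; exact_mod_cast hcomb
  have hNR : (1:ℝ) ≤ N := by exact_mod_cast hNpos
  nlinarith [mul_lt_mul_of_pos_left hN (show (0:ℝ) < N by linarith)]
end

section
/- For p ∈ (0, 1/4) and f(x) = (1 − 4p + 4x)(1 − H(x/(1 − 4p + 4x))), the function f is strictly decreasing on (0, (1−4p)/(a₀ − 3)), where a₀ ≈ 11.4445 is the unique real root of a³ − 11a² − 5a − 1 = 0; consequently the minimizer of f over [0, p] is min{p, (1−4p)/(a₀ − 3)}. -/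
/-!
For `x > 0` and `c = 1 - 4p`, the function equals
`c + 4x + (x log x + (c+3x) log(c+3x) - (c+4x) log(c+4x)) / log 2`, whose derivative is
`log (16 x (c+3x)³ / (c+4x)⁴) / log 2`. Substituting `c + 3x = a x` turns the sign of
`(c+4x)⁴ - 16 x (c+3x)³` into that of `(a+1)⁴ - 16a³ = (a-1)(a³ - 11a² - 5a - 1)`, which for
`a > 1` changes sign exactly at `a = a₀`, i.e. at `x₀ = c / (a₀ - 3)`. So the function decreases
on `[0, x₀]` and increases after it, and its minimum over `[0, p]` sits at `min p x₀`.
-/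

/-- Binary entropy function. -/
noncomputable def binEnt (x : ℝ) : ℝ :=
  -(x * Real.logb 2 x) - (1 - x) * Real.logb 2 (1 - x)

open Real Set

section Cubic

variable {a₀ a : ℝ}

lemma cubic_pos_iff (hroot : a₀ ^ 3 - 11 * a₀ ^ 2 - 5 * a₀ - 1 = 0) (ha₀ : 11 < a₀)
    (ha : 0 ≤ a) : 0 < a ^ 3 - 11 * a ^ 2 - 5 * a - 1 ↔ a₀ < a := by
  constructor
  · intro hpos
    by_contra! hle
    rcases hle.lt_or_eq with hlt | rfl
    · nlinarith [mul_pos (sub_pos.2 hlt) (sub_pos.2 ha₀), sq_nonneg (a - 7),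
        mul_nonneg ha (sub_pos.2 ha₀).le]
    · linarith
  · intro hlt
    nlinarith [mul_pos (sub_pos.2 hlt)
      (show 0 < a ^ 2 + a * a₀ + a₀ ^ 2 - 11 * a - 11 * a₀ - 5 by nlinarith)]

lemma sixteen_mul_cube_lt_iff (hroot : a₀ ^ 3 - 11 * a₀ ^ 2 - 5 * a₀ - 1 = 0)
    (ha₀ : 11 < a₀) (ha : 1 < a) : 16 * a ^ 3 < (a + 1) ^ 4 ↔ a₀ < a := by
  have hfactor : (a + 1) ^ 4 - 16 * a ^ 3 = (a - 1) * (a ^ 3 - 11 * a ^ 2 - 5 * a - 1) := by ring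
  rw [← cubic_pos_iff hroot ha₀ (by linarith), ← sub_pos, hfactor]
  exact mul_pos_iff_of_pos_left (sub_pos.2 ha)

lemma sixteen_mul_mul_cube_lt_iff {c x : ℝ} (hroot : a₀ ^ 3 - 11 * a₀ ^ 2 - 5 * a₀ - 1 = 0)
    (ha₀ : 11 < a₀) (hc : 0 < c) (hx : 0 < x) :
    16 * x * (c + 3 * x) ^ 3 < (c + 4 * x) ^ 4 ↔ x < c / (a₀ - 3) := by
  set a := c / x + 3 with ha_def
  have ha1 : 1 < a := by have hcx := div_pos hc hx; linarith
  have h3 : c + 3 * x = a * x := by rw [ha_def]; field_simp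
  have h4 : c + 4 * x = (a + 1) * x := by linarith
  calc 16 * x * (c + 3 * x) ^ 3 < (c + 4 * x) ^ 4 ↔ 16 * a ^ 3 * x ^ 4 < (a + 1) ^ 4 * x ^ 4 := by
        rw [h3, h4]; ring_nf
    _ ↔ a₀ < a := by
        rw [mul_lt_mul_iff_left₀ (pow_pos hx 4), sixteen_mul_cube_lt_iff hroot ha₀ ha1]
    _ ↔ x < c / (a₀ - 3) := by
        rw [ha_def, ← sub_lt_iff_lt_add, lt_div_iff₀ hx, lt_div_iff₀ (by linarith)]
        constructor <;> intro h <;> linarith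

end Cubic

noncomputable def entropyDefect (c x : ℝ) : ℝ :=
  (c + 4 * x) * (1 - binEnt (x / (c + 4 * x)))

noncomputable def entropyDefectMulLog (c x : ℝ) : ℝ :=
  c + 4 * x + (x * log x + (c + 3 * x) * log (c + 3 * x) - (c + 4 * x) * log (c + 4 * x)) / log 2

section EntropyDefect

variable {c : ℝ}

lemma entropyDefect_eqOn (hc : 0 < c) :
    EqOn (entropyDefect c) (entropyDefectMulLog c) (Ici 0) := by
  intro x hx
  rcases (mem_Ici.1 hx).eq_or_lt with rfl | hx
  · simp [entropyDefect, entropyDefectMulLog, binEnt]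
  have h3 : 0 < c + 3 * x := by linarith
  have h4 : 0 < c + 4 * x := by linarith
  have hcompl : 1 - x / (c + 4 * x) = (c + 3 * x) / (c + 4 * x) := by field_simp; ring
  simp only [entropyDefect, entropyDefectMulLog, binEnt, hcompl, logb,
    log_div hx.ne' h4.ne', log_div h3.ne' h4.ne']
  field_simp
  ring

lemma continuous_entropyDefectMulLog (c : ℝ) : Continuous (entropyDefectMulLog c) := by
  unfold entropyDefectMulLog
  have hmul_log (k : ℝ) : Continuous fun x : ℝ ↦ (c + k * x) * log (c + k * x) :=
    continuous_mul_log.comp (by fun_prop)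
  exact (by fun_prop : Continuous fun x : ℝ ↦ c + 4 * x).add
    (((continuous_mul_log.add (hmul_log 3)).sub (hmul_log 4)).div_const _)

lemma hasDerivAt_entropyDefectMulLog (hc : 0 < c) {x : ℝ} (hx : 0 < x) :
    HasDerivAt (entropyDefectMulLog c)
      ((log (16 * x * (c + 3 * x) ^ 3) - log ((c + 4 * x) ^ 4)) / log 2) x := by
  have hmul_log (k : ℝ) (hk : 0 ≤ k) : HasDerivAt (fun y ↦ (c + k * y) * log (c + k * y))
      ((log (c + k * x) + 1) * k) x := by
    have hlin : HasDerivAt (fun y ↦ c + k * y) k x := by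
      simpa using ((hasDerivAt_id x).const_mul k).const_add c
    exact (hasDerivAt_mul_log (by positivity : c + k * x ≠ 0)).comp x hlin
  have hsum : HasDerivAt (entropyDefectMulLog c)
      (4 * 1 + (log x + 1 + (log (c + 3 * x) + 1) * 3 - (log (c + 4 * x) + 1) * 4) / log 2) x :=
    ((hasDerivAt_id x).const_mul (4 : ℝ)).const_add c |>.add
      ((((hasDerivAt_mul_log hx.ne').add (hmul_log 3 (by norm_num))).sub
        (hmul_log 4 (by norm_num))).div_const (log 2))
  refine hsum.congr_deriv ?_
  have h3 : 0 < c + 3 * x := by linarith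
  rw [log_mul (by positivity) (by positivity), log_mul (by norm_num) hx.ne', log_pow, log_pow,
    show (16 : ℝ) = 2 ^ 4 by norm_num, log_pow]
  field_simp [(log_pos one_lt_two).ne']
  push_cast
  ring

variable {a₀ : ℝ}

theorem strictAntiOn_entropyDefect (hroot : a₀ ^ 3 - 11 * a₀ ^ 2 - 5 * a₀ - 1 = 0)
    (ha₀ : 11 < a₀) (hc : 0 < c) : StrictAntiOn (entropyDefect c) (Icc 0 (c / (a₀ - 3))) := by
  refine StrictAntiOn.congr ?_ ((entropyDefect_eqOn hc).mono Icc_subset_Ici_self).symm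
  refine strictAntiOn_of_hasDerivWithinAt_neg
    (f' := fun x ↦ (log (16 * x * (c + 3 * x) ^ 3) - log ((c + 4 * x) ^ 4)) / log 2)
    (convex_Icc _ _)
    (continuous_entropyDefectMulLog c).continuousOn ?_ ?_ <;> rw [interior_Icc]
  · exact fun x hx ↦ (hasDerivAt_entropyDefectMulLog hc hx.1).hasDerivWithinAt
  rintro x ⟨hx0, hxx₀⟩
  have hlt := (sixteen_mul_mul_cube_lt_iff hroot ha₀ hc hx0).2 hxx₀
  exact div_neg_of_neg_of_pos (sub_neg.2 (log_lt_log (by positivity) hlt)) (log_pos one_lt_two)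

theorem monotoneOn_entropyDefect (hroot : a₀ ^ 3 - 11 * a₀ ^ 2 - 5 * a₀ - 1 = 0)
    (ha₀ : 11 < a₀) (hc : 0 < c) : MonotoneOn (entropyDefect c) (Ici (c / (a₀ - 3))) := by
  have hx₀ : 0 < c / (a₀ - 3) := div_pos hc (by linarith)
  refine MonotoneOn.congr ?_ ((entropyDefect_eqOn hc).mono (Ici_subset_Ici.2 hx₀.le)).symm
  refine monotoneOn_of_hasDerivWithinAt_nonneg
    (f' := fun x ↦ (log (16 * x * (c + 3 * x) ^ 3) - log ((c + 4 * x) ^ 4)) / log 2)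
    (convex_Ici _)
    (continuous_entropyDefectMulLog c).continuousOn ?_ ?_ <;> rw [interior_Ici]
  · exact fun x hx ↦ (hasDerivAt_entropyDefectMulLog hc (hx₀.trans hx)).hasDerivWithinAt
  intro x (hx₀x : c / (a₀ - 3) < x)
  have hx0 : 0 < x := hx₀.trans hx₀x
  have hle := not_lt.1 (mt (sixteen_mul_mul_cube_lt_iff hroot ha₀ hc hx0).1 (not_lt.2 hx₀x.le))
  exact div_nonneg (sub_nonneg.2 (log_le_log (by positivity) hle)) (log_pos one_lt_two).le

end EntropyDefect

lemma isMinOn_Icc_min_of_antitoneOn_of_monotoneOn {α β : Type*} [LinearOrder α] [Preorder β]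
    {f : α → β} {a m p : α} (hanti : AntitoneOn f (Icc a m)) (hmono : MonotoneOn f (Ici m)) :
    IsMinOn f (Icc a p) (min p m) := by
  intro x ⟨hax, hxp⟩
  rcases le_total p m with hpm | hmp
  · rw [min_eq_left hpm]
    exact hanti ⟨hax, hxp.trans hpm⟩ ⟨hax.trans hxp, hpm⟩ hxp
  · rw [min_eq_right hmp]
    rcases le_total x m with hxm | hmx
    · exact hanti ⟨hax, hxm⟩ ⟨hax.trans hxm, le_rfl⟩ hxm
    · exact hmono le_rfl hmx hmx

theorem f_decreasing_and_minimizer_general (p a₀ : ℝ) (hp4 : p < 1/4)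
    (hroot : a₀ ^ 3 - 11 * a₀ ^ 2 - 5 * a₀ - 1 = 0)
    (ha₀ : 11 < a₀) :
    StrictAntiOn (fun x : ℝ => (1 - 4*p + 4*x) * (1 - binEnt (x / (1 - 4*p + 4*x))))
      (Set.Ico 0 ((1 - 4*p) / (a₀ - 3))) ∧
    ∀ x ∈ Set.Icc (0:ℝ) p,
      (fun x : ℝ => (1 - 4*p + 4*x) * (1 - binEnt (x / (1 - 4*p + 4*x))))
          (min p ((1 - 4*p) / (a₀ - 3)))
        ≤ (fun x : ℝ => (1 - 4*p + 4*x) * (1 - binEnt (x / (1 - 4*p + 4*x)))) x := by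
  have hc : 0 < 1 - 4 * p := by linarith
  have hanti := strictAntiOn_entropyDefect hroot ha₀ hc
  exact ⟨hanti.mono Ico_subset_Icc_self, isMinOn_iff.1 <|
    isMinOn_Icc_min_of_antitoneOn_of_monotoneOn hanti.antitoneOn
      (monotoneOn_entropyDefect hroot ha₀ hc)⟩

/-- for `p ∈ (0, 1/4)`, the function
`f(x) = (1-4p+4x)(1 - H(x/(1-4p+4x)))` (extended continuously by `f(0) = 1-4p`,
which holds automatically here since `binEnt 0 = 0`) is strictly decreasing on
`[0, (1-4p)/(a₀-3))`, where `a₀ > 11` is the unique real root of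
`a³ - 11a² - 5a - 1 = 0`; consequently `min{p, (1-4p)/(a₀-3)}` minimizes `f`
over `[0, p]`. -/
theorem f_decreasing_and_minimizer (p a₀ : ℝ) (hp0 : 0 < p) (hp4 : p < 1/4)
    (hroot : a₀ ^ 3 - 11 * a₀ ^ 2 - 5 * a₀ - 1 = 0)
    (huniq : ∀ a : ℝ, a ^ 3 - 11 * a ^ 2 - 5 * a - 1 = 0 → a = a₀)
    (ha₀ : 11 < a₀) :
    StrictAntiOn (fun x : ℝ => (1 - 4*p + 4*x) * (1 - binEnt (x / (1 - 4*p + 4*x))))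
      (Set.Ico 0 ((1 - 4*p) / (a₀ - 3))) ∧
    ∀ x ∈ Set.Icc (0:ℝ) p,
      (fun x : ℝ => (1 - 4*p + 4*x) * (1 - binEnt (x / (1 - 4*p + 4*x))))
          (min p ((1 - 4*p) / (a₀ - 3)))
        ≤ (fun x : ℝ => (1 - 4*p + 4*x) * (1 - binEnt (x / (1 - 4*p + 4*x)))) x :=
  f_decreasing_and_minimizer_general p a₀ hp4 hroot ha₀
end
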